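/- First hexagon relation for unlinking (Proposition 3.1, relation (3.1b)): Let (C,x) be a quiver pair with m nodes and let i, j, k be pairwise distinct nodes. Let A be the result of applying to (C,x) the unlinkings U(i,j), then U(j,k), then U(m+1,k) (so A has m+3 nodes, the node created at step t having index m+t), and let B be the result of applying U(j,k), then U(i,j), then U(i,m+1). Let τ be the transposition of {1,…,m+3} exchanging m+1 and m+2. Then A and B coincide after relabeling by τ: A's matrix at (a,b) equals B's matrix at (τ(a),τ(b)) and A's variable at a equals B's variable at τ(a), for all a,b. -/
import Mathlib

set_option maxHeartbeats 1000000

namespace QuiverUnlink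

/-- Unlinking of the distinct nodes `i` and `j`: the matrix part.
Nodes are indexed `0, …, m-1`; the newly created node has index `m`. -/
def unlinkC {m : ℕ} (C : Fin m → Fin m → ℤ) (i j : Fin m) :
    Fin (m + 1) → Fin (m + 1) → ℤ := fun a b =>
  if ha : (a : ℕ) < m then
    if hb : (b : ℕ) < m then
      if ((⟨a, ha⟩ : Fin m) = i ∧ (⟨b, hb⟩ : Fin m) = j) ∨
         ((⟨a, ha⟩ : Fin m) = j ∧ (⟨b, hb⟩ : Fin m) = i) then
        C i j - 1
      else C ⟨a, ha⟩ ⟨b, hb⟩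
    else
      if (⟨a, ha⟩ : Fin m) = i then C i i + C i j - 1
      else if (⟨a, ha⟩ : Fin m) = j then C j j + C i j - 1
      else C ⟨a, ha⟩ i + C ⟨a, ha⟩ j
  else
    if hb : (b : ℕ) < m then
      if (⟨b, hb⟩ : Fin m) = i then C i i + C i j - 1
      else if (⟨b, hb⟩ : Fin m) = j then C j j + C i j - 1
      else C ⟨b, hb⟩ i + C ⟨b, hb⟩ j
    else C i i + C j j + 2 * C i j - 1

/-- Unlinking of the distinct nodes `i` and `j`: the generating-parameters part. -/
def unlinkX {G : Type*} [CommGroup G] {m : ℕ} (q : G) (x : Fin m → G) (i j : Fin m) :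
    Fin (m + 1) → G := fun a =>
  if ha : (a : ℕ) < m then x ⟨a, ha⟩ else q⁻¹ * x i * x j

/-- ℕ-indexed version of `unlinkC`. -/
def uC (m : ℕ) (D : ℕ → ℕ → ℤ) (i j : ℕ) : ℕ → ℕ → ℤ := fun a b =>
  if a < m then
    if b < m then
      if (a = i ∧ b = j) ∨ (a = j ∧ b = i) then D i j - 1 else D a b
    else
      if a = i then D i i + D i j - 1
      else if a = j then D j j + D i j - 1
      else D a i + D a j
  else
    if b < m then
      if b = i then D i i + D i j - 1
      else if b = j then D j j + D i j - 1
      else D b i + D b j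
    else D i i + D j j + 2 * D i j - 1

/-- ℕ-indexed version of `unlinkX`. -/
def uX {G : Type*} [CommGroup G] (m : ℕ) (q : G) (y : ℕ → G) (i j : ℕ) : ℕ → G := fun a =>
  if a < m then y a else q⁻¹ * y i * y j

lemma key (D : ℕ → ℕ → ℤ) (hD : ∀ p q, D p q = D q p) (m i j k : ℕ)
    (hi : i < m) (hj : j < m) (hk : k < m)
    (hij : i ≠ j) (hjk : j ≠ k) (hik : i ≠ k)
    (a b : ℕ) (ha : a < m + 3) (hb : b < m + 3) :
    uC (m+2) (uC (m+1) (uC m D i j) j k) m k a b =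
    uC (m+2) (uC (m+1) (uC m D j k) i j) i m
      (if a = m then m+1 else if a = m+1 then m else a)
      (if b = m then m+1 else if b = m+1 then m else b) := by
  obtain ⟨F1,F2,F3,F4,F5,F6,F7,F8,F9,F10,F11,F12⟩ :
      (i < m+1) ∧ (i < m+2) ∧ (j < m+1) ∧ (j < m+2) ∧ (k < m+1) ∧ (k < m+2)
      ∧ ¬(i = m) ∧ ¬(j = m) ∧ ¬(k = m) ∧ ¬(i = m+1) ∧ ¬(j = m+1) ∧ ¬(k = m+1) := by omega
  obtain ⟨G1,G2,G3,G4,G5,G6,G7,G8,G9,G10,G11,G12⟩ :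
      ¬(m = i) ∧ ¬(m = j) ∧ ¬(m = k) ∧ ¬(m+1 = i) ∧ ¬(m+1 = j) ∧ ¬(m+1 = k)
      ∧ ¬(m+2 = i) ∧ ¬(m+2 = j) ∧ ¬(m+2 = k) ∧ ¬(j = i) ∧ ¬(k = j) ∧ ¬(k = i) := by omega
  obtain ⟨H1,H2,H3,H4,H5,H6,H7,H8,H9,H10,H11,H12,H13,H14,H15⟩ :
      (m < m+1) ∧ (m < m+2) ∧ (m+1 < m+2) ∧ ¬(m < m) ∧ ¬(m+1 < m) ∧ ¬(m+1 < m+1)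
      ∧ ¬(m+2 < m) ∧ ¬(m+2 < m+1) ∧ ¬(m+2 < m+2) ∧ ¬(m = m+1) ∧ ¬(m = m+2)
      ∧ ¬(m+1 = m) ∧ ¬(m+1 = m+2) ∧ ¬(m+2 = m) ∧ ¬(m+2 = m+1) := by omega
  rcases (by omega : a < m ∨ a = m ∨ a = m+1 ∨ a = m+2) with ha'|ha'|ha'|ha' <;>
  rcases (by omega : b < m ∨ b = m ∨ b = m+1 ∨ b = m+2) with hb'|hb'|hb'|hb' <;>
    (try have Ja1 : a < m+1 := by omega) <;>
    (try have Ja2 : a < m+2 := by omega) <;>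
    (try have Ja3 : ¬(a = m) := by omega) <;>
    (try have Ja4 : ¬(a = m+1) := by omega) <;>
    (try have Jb1 : b < m+1 := by omega) <;>
    (try have Jb2 : b < m+2 := by omega) <;>
    (try have Jb3 : ¬(b = m) := by omega) <;>
    (try have Jb4 : ¬(b = m+1) := by omega) <;>
    simp only [uC, *, if_true, if_false, and_true, true_and, and_false, false_and,
      or_false, false_or, not_false_iff] <;>
    (try split_ifs) <;>
      first
        | omega
        | ring1
        | ((try casesm* (_ ∨ _), (_ ∧ _)) <;> (try subst_vars) <;>
            (try simp only [*]) <;> (try simp only [hD]) <;>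
            first | rfl | ring1 | omega)

lemma keyX {G : Type*} [CommGroup G] (q : G) (y : ℕ → G) (m i j k : ℕ)
    (hi : i < m) (hj : j < m) (hk : k < m) (a : ℕ) (ha : a < m + 3) :
    uX (m+2) q (uX (m+1) q (uX m q y i j) j k) m k a =
    uX (m+2) q (uX (m+1) q (uX m q y j k) i j) i m
      (if a = m then m+1 else if a = m+1 then m else a) := by
  obtain ⟨F1,F2,F3,F4,F5,F6,H1,H2,H3,H4,H5,H6,H7,H8,H9,H10⟩ :
      (i < m+1) ∧ (i < m+2) ∧ (j < m+1) ∧ (j < m+2) ∧ (k < m+1) ∧ (k < m+2)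
      ∧ (m < m+1) ∧ (m < m+2) ∧ (m+1 < m+2) ∧ ¬(m < m) ∧ ¬(m+1 < m) ∧ ¬(m+1 < m+1)
      ∧ ¬(m+2 < m) ∧ ¬(m+2 < m+1) ∧ ¬(m+2 < m+2) ∧ ¬(m = m+1) := by omega
  rcases (by omega : a < m ∨ a = m ∨ a = m+1 ∨ a = m+2) with ha'|ha'|ha'|ha' <;>
    (try have Ja1 : a < m+1 := by omega) <;>
    (try have Ja2 : a < m+2 := by omega) <;>
    (try have Ja3 : ¬(a = m) := by omega) <;>
    (try have Ja4 : ¬(a = m+1) := by omega) <;>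
    simp only [uX, *, if_true, if_false] <;>
    (try split_ifs) <;>
      first
        | rfl
        | omega
        | (simp only [mul_comm, mul_left_comm, mul_assoc])

/-- Extension of a `Fin m`-indexed matrix to ℕ by zero. -/
def ext {m : ℕ} (C : Fin m → Fin m → ℤ) : ℕ → ℕ → ℤ := fun p q =>
  if h : p < m ∧ q < m then C ⟨p, h.1⟩ ⟨q, h.2⟩ else 0

lemma ext_spec {m : ℕ} (C : Fin m → Fin m → ℤ) (p q : Fin m) :
    C p q = ext C (p : ℕ) (q : ℕ) := by
  simp [ext, p.isLt, q.isLt]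

lemma ext_symm {m : ℕ} (C : Fin m → Fin m → ℤ) (hC : ∀ a b, C a b = C b a) :
    ∀ p q, ext C p q = ext C q p := by
  intro p q
  unfold ext
  split_ifs with h1 h2 h2 <;> first | rfl | exact hC _ _ | tauto

/-- Extension of a `Fin m`-indexed family to ℕ by one. -/
def extX {G : Type*} [CommGroup G] {m : ℕ} (x : Fin m → G) : ℕ → G := fun p =>
  if h : p < m then x ⟨p, h⟩ else 1

lemma extX_spec {G : Type*} [CommGroup G] {m : ℕ} (x : Fin m → G) (p : Fin m) :
    x p = extX x (p : ℕ) := by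
  simp [extX, p.isLt]

lemma unlinkC_eq_uC {m : ℕ} (C : Fin m → Fin m → ℤ) (D : ℕ → ℕ → ℤ)
    (hD : ∀ p q : Fin m, C p q = D (p : ℕ) (q : ℕ)) (i j : Fin m) (a b : Fin (m+1)) :
    unlinkC C i j a b = uC m D (i : ℕ) (j : ℕ) (a : ℕ) (b : ℕ) := by
  unfold unlinkC uC
  by_cases ha : (a : ℕ) < m <;> by_cases hb : (b : ℕ) < m <;>
    simp only [ha, hb, dif_pos, dif_neg, not_false_iff, hD, Fin.ext_iff,
      if_true, if_false, dite_true, dite_false] <;>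
    split_ifs <;> simp_all

lemma unlinkX_eq_uX {G : Type*} [CommGroup G] (q : G) {m : ℕ} (x : Fin m → G) (y : ℕ → G)
    (hy : ∀ p : Fin m, x p = y (p : ℕ)) (i j : Fin m) (a : Fin (m+1)) :
    unlinkX q x i j a = uX m q y (i : ℕ) (j : ℕ) (a : ℕ) := by
  unfold unlinkX uX
  by_cases ha : (a : ℕ) < m <;>
    simp [ha, hy]

/-- **First hexagon relation for unlinking** (Proposition 3.1, relation (3.1b)).
For pairwise distinct nodes `i, j, k`, applying `U(i,j)`, `U(j,k)`, `U(m+1,k)` and applying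
`U(j,k)`, `U(i,j)`, `U(i,m+1)` give quiver pairs (with `m+3` nodes; the node created at step `t`
has index `m+t-1` in `Fin (m+3)`) that coincide after relabeling by the transposition of the
first two created nodes. -/
theorem hexagon_I_relation {G : Type*} [CommGroup G] (q : G) {m : ℕ}
    (C : Fin m → Fin m → ℤ) (hC : ∀ a b, C a b = C b a) (x : Fin m → G)
    (i j k : Fin m) (hij : i ≠ j) (hjk : j ≠ k) (hik : i ≠ k) :
    let A : Fin (m + 3) → Fin (m + 3) → ℤ :=
      unlinkC (unlinkC (unlinkC C i j) j.castSucc k.castSucc)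
        ⟨m, by omega⟩ (k.castSucc.castSucc)
    let Ax : Fin (m + 3) → G :=
      unlinkX q (unlinkX q (unlinkX q x i j) j.castSucc k.castSucc)
        ⟨m, by omega⟩ (k.castSucc.castSucc)
    let B : Fin (m + 3) → Fin (m + 3) → ℤ :=
      unlinkC (unlinkC (unlinkC C j k) i.castSucc j.castSucc)
        (i.castSucc.castSucc) ⟨m, by omega⟩
    let Bx : Fin (m + 3) → G :=
      unlinkX q (unlinkX q (unlinkX q x j k) i.castSucc j.castSucc)
        (i.castSucc.castSucc) ⟨m, by omega⟩
    let τ : Equiv.Perm (Fin (m + 3)) :=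
      Equiv.swap ⟨m, by omega⟩ ⟨m + 1, by omega⟩
    (∀ a b, A a b = B (τ a) (τ b)) ∧ (∀ a, Ax a = Bx (τ a)) := by
  intro A Ax B Bx τ
  -- coordinates of the swap
  have hτ : ∀ p : Fin (m + 3),
      ((Equiv.swap (⟨m, by omega⟩ : Fin (m+3)) ⟨m + 1, by omega⟩ p : Fin (m+3)) : ℕ)
        = (if (p : ℕ) = m then m+1 else if (p : ℕ) = m+1 then m else (p : ℕ)) := by
    intro p
    rw [Equiv.swap_apply_def]
    split_ifs <;> simp_all [Fin.ext_iff] <;> omega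
  -- transfer lemmas, A side
  have t1 : ∀ p q : Fin (m+1), unlinkC C i j p q
      = uC m (ext C) (i : ℕ) (j : ℕ) (p : ℕ) (q : ℕ) :=
    fun p q => unlinkC_eq_uC C (ext C) (ext_spec C) i j p q
  have t2 : ∀ p q : Fin (m+2),
      unlinkC (unlinkC C i j) j.castSucc k.castSucc p q
        = uC (m+1) (uC m (ext C) (i : ℕ) (j : ℕ)) (j : ℕ) (k : ℕ) (p : ℕ) (q : ℕ) := by
    intro p q
    have h := unlinkC_eq_uC (unlinkC C i j) (uC m (ext C) (i : ℕ) (j : ℕ)) t1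
      j.castSucc k.castSucc p q
    simpa using h
  have t3 : ∀ p q : Fin (m+3),
      unlinkC (unlinkC (unlinkC C i j) j.castSucc k.castSucc)
          ⟨m, by omega⟩ (k.castSucc.castSucc) p q
        = uC (m+2) (uC (m+1) (uC m (ext C) (i : ℕ) (j : ℕ)) (j : ℕ) (k : ℕ))
            m (k : ℕ) (p : ℕ) (q : ℕ) := by
    intro p q
    have h := unlinkC_eq_uC (unlinkC (unlinkC C i j) j.castSucc k.castSucc)
      (uC (m+1) (uC m (ext C) (i : ℕ) (j : ℕ)) (j : ℕ) (k : ℕ)) t2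
      ⟨m, by omega⟩ (k.castSucc.castSucc) p q
    simpa using h
  -- transfer lemmas, B side
  have s1 : ∀ p q : Fin (m+1), unlinkC C j k p q
      = uC m (ext C) (j : ℕ) (k : ℕ) (p : ℕ) (q : ℕ) :=
    fun p q => unlinkC_eq_uC C (ext C) (ext_spec C) j k p q
  have s2 : ∀ p q : Fin (m+2),
      unlinkC (unlinkC C j k) i.castSucc j.castSucc p q
        = uC (m+1) (uC m (ext C) (j : ℕ) (k : ℕ)) (i : ℕ) (j : ℕ) (p : ℕ) (q : ℕ) := by
    intro p q
    have h := unlinkC_eq_uC (unlinkC C j k) (uC m (ext C) (j : ℕ) (k : ℕ)) s1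
      i.castSucc j.castSucc p q
    simpa using h
  have s3 : ∀ p q : Fin (m+3),
      unlinkC (unlinkC (unlinkC C j k) i.castSucc j.castSucc)
          (i.castSucc.castSucc) ⟨m, by omega⟩ p q
        = uC (m+2) (uC (m+1) (uC m (ext C) (j : ℕ) (k : ℕ)) (i : ℕ) (j : ℕ))
            (i : ℕ) m (p : ℕ) (q : ℕ) := by
    intro p q
    have h := unlinkC_eq_uC (unlinkC (unlinkC C j k) i.castSucc j.castSucc)
      (uC (m+1) (uC m (ext C) (j : ℕ) (k : ℕ)) (i : ℕ) (j : ℕ)) s2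
      (i.castSucc.castSucc) ⟨m, by omega⟩ p q
    simpa using h
  -- transfer lemmas for the X part, A side
  have u1 : ∀ p : Fin (m+1), unlinkX q x i j p
      = uX m q (extX x) (i : ℕ) (j : ℕ) (p : ℕ) :=
    fun p => unlinkX_eq_uX q x (extX x) (extX_spec x) i j p
  have u2 : ∀ p : Fin (m+2),
      unlinkX q (unlinkX q x i j) j.castSucc k.castSucc p
        = uX (m+1) q (uX m q (extX x) (i : ℕ) (j : ℕ)) (j : ℕ) (k : ℕ) (p : ℕ) := by
    intro p
    have h := unlinkX_eq_uX q (unlinkX q x i j) (uX m q (extX x) (i : ℕ) (j : ℕ)) u1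
      j.castSucc k.castSucc p
    simpa using h
  have u3 : ∀ p : Fin (m+3),
      unlinkX q (unlinkX q (unlinkX q x i j) j.castSucc k.castSucc)
          ⟨m, by omega⟩ (k.castSucc.castSucc) p
        = uX (m+2) q (uX (m+1) q (uX m q (extX x) (i : ℕ) (j : ℕ)) (j : ℕ) (k : ℕ))
            m (k : ℕ) (p : ℕ) := by
    intro p
    have h := unlinkX_eq_uX q (unlinkX q (unlinkX q x i j) j.castSucc k.castSucc)
      (uX (m+1) q (uX m q (extX x) (i : ℕ) (j : ℕ)) (j : ℕ) (k : ℕ)) u2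
      ⟨m, by omega⟩ (k.castSucc.castSucc) p
    simpa using h
  -- transfer lemmas for the X part, B side
  have v1 : ∀ p : Fin (m+1), unlinkX q x j k p
      = uX m q (extX x) (j : ℕ) (k : ℕ) (p : ℕ) :=
    fun p => unlinkX_eq_uX q x (extX x) (extX_spec x) j k p
  have v2 : ∀ p : Fin (m+2),
      unlinkX q (unlinkX q x j k) i.castSucc j.castSucc p
        = uX (m+1) q (uX m q (extX x) (j : ℕ) (k : ℕ)) (i : ℕ) (j : ℕ) (p : ℕ) := by
    intro p
    have h := unlinkX_eq_uX q (unlinkX q x j k) (uX m q (extX x) (j : ℕ) (k : ℕ)) v1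
      i.castSucc j.castSucc p
    simpa using h
  have v3 : ∀ p : Fin (m+3),
      unlinkX q (unlinkX q (unlinkX q x j k) i.castSucc j.castSucc)
          (i.castSucc.castSucc) ⟨m, by omega⟩ p
        = uX (m+2) q (uX (m+1) q (uX m q (extX x) (j : ℕ) (k : ℕ)) (i : ℕ) (j : ℕ))
            (i : ℕ) m (p : ℕ) := by
    intro p
    have h := unlinkX_eq_uX q (unlinkX q (unlinkX q x j k) i.castSucc j.castSucc)
      (uX (m+1) q (uX m q (extX x) (j : ℕ) (k : ℕ)) (i : ℕ) (j : ℕ)) v2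
      (i.castSucc.castSucc) ⟨m, by omega⟩ p
    simpa using h
  have hij' : (i : ℕ) ≠ (j : ℕ) := fun h => hij (Fin.ext h)
  have hjk' : (j : ℕ) ≠ (k : ℕ) := fun h => hjk (Fin.ext h)
  have hik' : (i : ℕ) ≠ (k : ℕ) := fun h => hik (Fin.ext h)
  constructor
  · intro a b
    show unlinkC (unlinkC (unlinkC C i j) j.castSucc k.castSucc)
        ⟨m, by omega⟩ (k.castSucc.castSucc) a b
      = unlinkC (unlinkC (unlinkC C j k) i.castSucc j.castSucc)
        (i.castSucc.castSucc) ⟨m, by omega⟩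
        (Equiv.swap ⟨m, by omega⟩ ⟨m + 1, by omega⟩ a)
        (Equiv.swap ⟨m, by omega⟩ ⟨m + 1, by omega⟩ b)
    rw [t3 a b, s3 _ _, hτ a, hτ b]
    exact key (ext C) (ext_symm C hC) m i j k i.isLt j.isLt k.isLt hij' hjk' hik'
      (a : ℕ) (b : ℕ) a.isLt b.isLt
  · intro a
    show unlinkX q (unlinkX q (unlinkX q x i j) j.castSucc k.castSucc)
        ⟨m, by omega⟩ (k.castSucc.castSucc) a
      = unlinkX q (unlinkX q (unlinkX q x j k) i.castSucc j.castSucc)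
        (i.castSucc.castSucc) ⟨m, by omega⟩
        (Equiv.swap ⟨m, by omega⟩ ⟨m + 1, by omega⟩ a)
    rw [u3 a, v3 _, hτ a]
    exact keyX q (extX x) m i j k i.isLt j.isLt k.isLt (a : ℕ) a.isLt

end QuiverUnlink
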